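/- Let {e,h,f} ⊂ 𝔤 be an sl₂-triple with [h,e]=e, [h,f]=−f, [e,f]=2h in a finite-dimensional complex Lie algebra with invariant nondegenerate symmetric bilinear form ⟨·,·⟩. Then the restriction of ⟨·,·⟩ to the pairing 𝔤^f × 𝔤^e (centralizer of f paired with centralizer of e) is nondegenerate; i.e., 𝔤^f is dual to 𝔤^e under ⟨·,·⟩. -/

import Mathlib

/-!
In Mathlib's normalization `(2h, e, f)` is an `sl₂`-triple; write `H, E, F` for the adjoint
actions. Invariance of `B` puts `range E` inside the `B`-orthogonal of `𝔤^e = ker E`, and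
nondegeneracy plus rank–nullity make them equal; so both claims reduce to
`ker F ∩ range E = 0`, for the triple and for the swapped triple `(f, -h, e)`.

This intersection is `H`-stable. A nonzero `H`-eigenvector `x` in it is primitive for `F`, so its
weight is `-n` with `n : ℕ`. If `x = E^{k+1} y` with `y` of generalized weight `-n - 2(k+1)`, then
`0 = F x = E^{k+1} F y - (k+1) (H - k) E^k y`, and `H - k` is invertible on the generalized
weight space `-n - 2` containing `E^k y` and preserves `range E^{k+1}`; hence
`E^k y ∈ range E^{k+1}` and `x ∈ range E^{k+2}`. Thus `x` lies in the image under every `E^k` of the generalized weight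
space `-n - 2k`, which vanishes for large `k` since `H` has finitely many eigenvalues.
-/

open Module LinearMap

lemma Submodule.mem_of_apply_mem_of_disjoint_ker {K V : Type*} [Field K] [AddCommGroup V]
    [Module K V] [FiniteDimensional K V] {T : End K V} {P Q : Submodule K V}
    (hP : Set.MapsTo T P P) (hQ : Set.MapsTo T Q Q) (hPT : Disjoint P (ker T)) {z : V}
    (hz : z ∈ P) (hTz : T z ∈ Q) : z ∈ Q := by
  have hPQ : Set.MapsTo T (P ⊓ Q : Submodule K V) (P ⊓ Q : Submodule K V) :=
    fun w hw ↦ ⟨hP hw.1, hQ hw.2⟩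
  have hinj : Function.Injective (T.restrict hPQ) := by
    refine ker_eq_bot.mp (ker_eq_bot'.mpr fun w hw ↦ Subtype.ext ?_)
    exact Submodule.disjoint_def.mp hPT w w.2.1 (congrArg Subtype.val hw)
  obtain ⟨r, hr⟩ := injective_iff_surjective.mp hinj ⟨T z, hP hz, hTz⟩
  have hTr : T r = T z := congrArg Subtype.val hr
  have hzr : z - r = 0 := Submodule.disjoint_def.mp hPT _ (sub_mem hz r.2.1)
    (by rw [mem_ker, map_sub, hTr, sub_self])
  exact sub_eq_zero.mp hzr ▸ r.2.2

namespace Module.End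

section CommRing

variable {R V : Type*} [CommRing R] [AddCommGroup V] [Module R V] {H A : End R V} {d : R}

lemma semiconjBy_sub_smul_one_of_mul_eq (hA : H * A = A * H + d • A) (c : R) :
    SemiconjBy A (H - c • 1) (H - (c + d) • 1) := by
  simp only [SemiconjBy, mul_sub, sub_mul, hA, mul_smul_comm, smul_mul_assoc, mul_one, one_mul]
  module

lemma mapsTo_maxGenEigenspace_of_mul_eq (hA : H * A = A * H + d • A) (c : R) :
    Set.MapsTo A (H.maxGenEigenspace c) (H.maxGenEigenspace (c + d)) := by
  intro v hv
  obtain ⟨k, hk⟩ := (mem_maxGenEigenspace H c v).mp hv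
  refine (mem_maxGenEigenspace H (c + d) (A v)).mpr ⟨k, ?_⟩
  rw [← mul_apply, ← ((semiconjBy_sub_smul_one_of_mul_eq hA c).pow_right k).eq, mul_apply, hk,
    map_zero]

lemma mapsTo_range_of_mul_eq (hA : H * A = A * H + d • A) (c : R) :
    Set.MapsTo ⇑(H - c • 1) (range A) (range A) := by
  rintro _ ⟨w, rfl⟩
  have := (semiconjBy_sub_smul_one_of_mul_eq hA (c - d)).eq
  rw [sub_add_cancel] at this
  exact ⟨(H - (c - d) • 1) w, by rw [← mul_apply, this, mul_apply]⟩

lemma mul_pow_eq_of_mul_eq (hA : H * A = A * H + d • A) (k : ℕ) :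
    H * A ^ k = A ^ k * H + ((k : R) * d) • A ^ k := by
  induction k with
  | zero => simp
  | succ k ih =>
    rw [pow_succ, ← mul_assoc, ih, add_mul, mul_assoc, hA, smul_mul_assoc, mul_add, ← mul_assoc,
      mul_smul_comm, ← pow_succ]
    push_cast
    match_scalars <;> ring

lemma mapsTo_ker_of_mul_eq (hA : H * A = A * H + d • A) : Set.MapsTo H (ker A) (ker A) := by
  intro u hu
  have := congrArg (· u) hA
  simp only [mul_apply, LinearMap.add_apply, LinearMap.smul_apply, mem_ker.mp hu, map_zero,
    smul_zero, add_zero] at this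
  exact mem_ker.mpr this.symm

end CommRing

section Field

variable {K V : Type*} [Field K] [AddCommGroup V] [Module K V] {H A : End K V} {d : K}

lemma disjoint_maxGenEigenspace_ker_sub_smul_one {μ c : K} (hc : c ≠ μ) :
    Disjoint (H.maxGenEigenspace μ) (ker (H - c • 1)) := by
  refine Submodule.disjoint_def.mpr fun w hμ hc' ↦ ?_
  have hw : w ∈ H.maxGenEigenspace c :=
    eigenspace_le_maxGenEigenspace (mem_eigenspace_iff.mpr (sub_eq_zero.mp hc' ▸ by simp))
  exact Submodule.disjoint_def.mp (H.independent_maxGenEigenspace.pairwiseDisjoint hc) w hw hμ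

variable [FiniteDimensional K V]

lemma exists_mem_maxGenEigenspace_apply_eq [IsAlgClosed K] (hA : H * A = A * H + d • A) {ν : K}
    {y : V} (hy : A y ∈ H.maxGenEigenspace ν) : ∃ y' ∈ H.maxGenEigenspace (ν - d), A y' = A y := by
  have hy_mem : y ∈ H.maxGenEigenspace (ν - d) ⊔ ⨆ μ, ⨆ (_ : μ ≠ ν - d), H.maxGenEigenspace μ := by
    rw [← iSup_split_single, iSup_maxGenEigenspace_eq_top]
    exact Submodule.mem_top
  obtain ⟨y₁, hy₁, y₂, hy₂, rfl⟩ := Submodule.mem_sup.mp hy_mem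
  have hAy₁ : A y₁ ∈ H.maxGenEigenspace ν := by
    simpa using mapsTo_maxGenEigenspace_of_mul_eq hA (ν - d) hy₁
  have hAy₂ : A y₂ ∈ ⨆ μ, ⨆ (_ : μ ≠ ν), H.maxGenEigenspace μ := by
    have : Submodule.map A (⨆ μ, ⨆ (_ : μ ≠ ν - d), H.maxGenEigenspace μ) ≤
        ⨆ μ, ⨆ (_ : μ ≠ ν), H.maxGenEigenspace μ := by
      simp only [Submodule.map_iSup]
      refine iSup₂_le fun μ hμ ↦ ?_
      refine ((Submodule.map_le_iff_le_comap (q := H.maxGenEigenspace (μ + d))).mpr fun w hw ↦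
        mapsTo_maxGenEigenspace_of_mul_eq hA μ hw).trans (le_iSup₂_of_le (μ + d) ?_ le_rfl)
      exact fun h ↦ hμ (eq_sub_of_add_eq h)
    exact this (Submodule.mem_map_of_mem hy₂)
  have hAy₂_zero : A y₂ = 0 := by
    refine Submodule.disjoint_def.mp (H.independent_maxGenEigenspace ν) _ ?_ hAy₂
    simpa [map_add] using sub_mem hy hAy₁
  exact ⟨y₁, hy₁, by rw [map_add, hAy₂_zero, add_zero]⟩

lemma exists_maxGenEigenspace_sub_mul_eq_bot [CharZero K] (ν : K) (hd : d ≠ 0) :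
    ∃ k : ℕ, H.maxGenEigenspace (ν - k * d) = ⊥ := by
  by_contra! h
  have hinj : Function.Injective fun k : ℕ ↦ ν - k * d := fun a b hab ↦ by
    simpa [hd] using hab
  refine Set.infinite_of_injective_forall_mem hinj (fun k ↦ ?_) H.finite_hasEigenvalue
  exact HasUnifEigenvalue.lt (k := ⊤) zero_lt_one (h k)

lemma eq_zero_of_forall_mem_range_pow [IsAlgClosed K] [CharZero K] (hA : H * A = A * H + d • A)
    (hd : d ≠ 0) {ν : K} {x : V} (hx : x ∈ H.maxGenEigenspace ν)
    (hxA : ∀ k : ℕ, x ∈ range (A ^ k)) : x = 0 := by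
  obtain ⟨k, hk⟩ := exists_maxGenEigenspace_sub_mul_eq_bot (H := H) ν hd
  obtain ⟨y, rfl⟩ := hxA k
  obtain ⟨y', hy', hy'y⟩ := exists_mem_maxGenEigenspace_apply_eq (mul_pow_eq_of_mul_eq hA k) hx
  rw [hk, Submodule.mem_bot] at hy'
  rw [← hy'y, hy', map_zero]

end Field

section Sl2Relations

variable {K V : Type*} [Field K] [AddCommGroup V] [Module K V] {H E F : End K V}

lemma mul_pow_succ_eq_of_sl2 (hHE : H * E = E * H + (2 : K) • E) (hEF : E * F = F * E + H)
    (k : ℕ) :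
    F * E ^ (k + 1) = E ^ (k + 1) * F - ((k : K) + 1) • ((H - (k : K) • 1) * E ^ k) := by
  induction k with
  | zero => simp [hEF]
  | succ k ih =>
    have hFE : F * E = E * F - H := eq_sub_of_add_eq hEF.symm
    have hEkH : E ^ (k + 1) * H = H * E ^ (k + 1) - ((k + 1 : ℕ) * (2 : K)) • E ^ (k + 1) :=
      eq_sub_of_add_eq (mul_pow_eq_of_mul_eq hHE (k + 1)).symm
    rw [pow_succ _ (k + 1), ← mul_assoc, ih, sub_mul, mul_assoc _ F E, hFE, mul_sub, hEkH,
      ← mul_assoc, ← pow_succ, smul_mul_assoc, mul_assoc, ← pow_succ]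
    simp only [sub_mul, smul_mul_assoc, one_mul]
    push_cast
    module

lemma mem_range_pow_succ_succ [IsAlgClosed K] [CharZero K] [FiniteDimensional K V]
    (hHE : H * E = E * H + (2 : K) • E) (hEF : E * F = F * E + H) {n : ℕ} {x : V}
    (hFx : F x = 0) (hHx : H x = -(n : K) • x) {k : ℕ} (hk : x ∈ range (E ^ (k + 1))) :
    x ∈ range (E ^ (k + 2)) := by
  obtain ⟨y₀, rfl⟩ := hk
  obtain ⟨y, hy, hyy₀⟩ := exists_mem_maxGenEigenspace_apply_eq (mul_pow_eq_of_mul_eq hHE (k + 1))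
    (eigenspace_le_maxGenEigenspace (mem_eigenspace_iff.mpr hHx))
  rw [← hyy₀] at hFx ⊢
  have hz : (E ^ k) y ∈ H.maxGenEigenspace (-n - 2) := by
    have := mapsTo_maxGenEigenspace_of_mul_eq (mul_pow_eq_of_mul_eq hHE k) _ hy
    rwa [show -(n : K) - (k + 1 : ℕ) * 2 + k * 2 = -n - 2 by push_cast; ring] at this
  have hTz : (H - (k : K) • 1) ((E ^ k) y) ∈ range (E ^ (k + 1)) := by
    have := congrArg (· y) (mul_pow_succ_eq_of_sl2 hHE hEF k)
    simp only [mul_apply, hFx, LinearMap.sub_apply, LinearMap.smul_apply] at this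
    refine ⟨((k : K) + 1)⁻¹ • F y, ?_⟩
    rw [map_smul, sub_eq_zero.mp this.symm, inv_smul_smul₀ (Nat.cast_add_one_ne_zero k)]
    simp
  have hk : (k : K) ≠ -n - 2 := fun h ↦
    Nat.cast_ne_zero.mpr (by omega : k + n + 2 ≠ 0) (by push_cast; linear_combination h)
  have hcomm : Commute H (H - (k : K) • 1) :=
    (Commute.refl H).sub_right ((Commute.one_right H).smul_right _)
  obtain ⟨w, hw⟩ := Submodule.mem_of_apply_mem_of_disjoint_ker
    (mapsTo_maxGenEigenspace_of_comm hcomm _)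
    (mapsTo_range_of_mul_eq (mul_pow_eq_of_mul_eq hHE (k + 1)) k)
    (disjoint_maxGenEigenspace_ker_sub_smul_one hk) hz hTz
  exact ⟨w, by rw [pow_succ', mul_apply, hw, ← mul_apply, ← pow_succ']⟩

end Sl2Relations

end Module.End

lemma LieModule.toEnd_mul_toEnd {K L M : Type*} [CommRing K] [LieRing L] [LieAlgebra K L]
    [AddCommGroup M] [Module K M] [LieRingModule L M] [LieModule K L M] (x y : L) :
    toEnd K L M x * toEnd K L M y = toEnd K L M y * toEnd K L M x + toEnd K L M ⁅x, y⁆ := by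
  ext m
  simp only [Module.End.mul_apply, LinearMap.add_apply, toEnd_apply_apply, leibniz_lie x y m]
  abel

open LieModule Module.End in
theorem IsSl2Triple.disjoint_ker_toEnd_range_toEnd {K L M : Type*} [Field K] [CharZero K]
    [IsAlgClosed K] [LieRing L] [LieAlgebra K L] [AddCommGroup M] [Module K M] [LieRingModule L M]
    [LieModule K L M] [FiniteDimensional K M] {h e f : L} (t : IsSl2Triple h e f) :
    Disjoint (ker (toEnd K L M f)) (range (toEnd K L M e)) := by
  set H := toEnd K L M h
  set E := toEnd K L M e
  set F := toEnd K L M f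
  have hHE : H * E = E * H + (2 : K) • E := by rw [toEnd_mul_toEnd, t.lie_h_e_smul K, map_smul]
  have hHF : H * F = F * H + (-2 : K) • F := by
    rw [toEnd_mul_toEnd, t.lie_lie_smul_f K, map_neg, map_smul, neg_smul]
  have hEF : E * F = F * E + H := by rw [toEnd_mul_toEnd, t.lie_e_f]
  set U := ker F ⊓ range E
  have hU : Set.MapsTo H U U := fun u hu ↦
    ⟨mapsTo_ker_of_mul_eq hHF hu.1, by simpa using mapsTo_range_of_mul_eq hHE 0 hu.2⟩
  rw [disjoint_iff]
  by_contra hU_ne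
  have : Nontrivial U := Submodule.nontrivial_iff_ne_bot.mpr hU_ne
  obtain ⟨μ, hμ⟩ := exists_eigenvalue (H.restrict hU)
  obtain ⟨⟨x, hxF, hxE⟩, hx⟩ := hμ.exists_hasEigenvector
  have hHx : H x = μ • x := congrArg Subtype.val hx.apply_eq_smul
  have hx0 : x ≠ 0 := fun h0 ↦ hx.2 (Subtype.ext h0)
  obtain ⟨n, hn⟩ : ∃ n : ℕ, -μ = n :=
    (⟨hx0, by rw [neg_lie, neg_smul, ← toEnd_apply_apply K, hHx], hxF⟩ :
      t.symm.HasPrimitiveVectorWith x (-μ)).exists_nat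
  have hHx' : H x = -(n : K) • x := by rw [← hn, neg_neg, hHx]
  have hx_range : ∀ k, x ∈ range (E ^ k) := by
    intro k
    induction k with
    | zero => simp
    | succ k ih =>
      rcases k with _ | k
      · simpa using hxE
      · exact mem_range_pow_succ_succ hHE hEF hxF hHx' ih
  exact hx0 (eq_zero_of_forall_mem_range_pow hHE two_ne_zero
    (eigenspace_le_maxGenEigenspace (mem_eigenspace_iff.mpr hHx)) hx_range)

lemma disjoint_ker_ad_range_ad {K g : Type*} [Field K] [CharZero K] [IsAlgClosed K] [LieRing g]
    [LieAlgebra K g] [FiniteDimensional K g] {e h f : g} (hhe : ⁅h, e⁆ = e) (hhf : ⁅h, f⁆ = -f)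
    (hef : ⁅e, f⁆ = (2 : K) • h) :
    Disjoint (ker (LieAlgebra.ad K g f)) (range (LieAlgebra.ad K g e)) := by
  rcases eq_or_ne h 0 with rfl | hh
  · have he : e = 0 := by rw [← hhe, zero_lie]
    simp [he]
  · exact IsSl2Triple.disjoint_ker_toEnd_range_toEnd (M := g)
      { h_ne_zero := smul_ne_zero two_ne_zero hh
        lie_e_f := hef
        lie_h_e_nsmul := by rw [smul_lie, hhe, two_smul, two_nsmul]
        lie_h_f_nsmul := by rw [smul_lie, hhf, smul_neg, two_smul, two_nsmul] }

lemma LinearMap.BilinForm.orthogonal_ker_eq_range {K V : Type*} [Field K] [AddCommGroup V]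
    [Module K V] [FiniteDimensional K V] {B : LinearMap.BilinForm K V} (hB : B.Nondegenerate)
    {T : Module.End K V} (hT : range T ≤ B.orthogonal (ker T)) : B.orthogonal (ker T) = range T :=
  (Submodule.eq_of_le_of_finrank_le hT <| by
    have := T.finrank_range_add_finrank_ker
    rw [finrank_orthogonal hB]
    omega).symm

section InvariantForm

variable {K g : Type*} [Field K] [LieRing g] [LieAlgebra K g] [FiniteDimensional K g]
  {B : LinearMap.BilinForm K g}

lemma orthogonal_ker_ad_eq_range_ad (hB : B.Nondegenerate)
    (hinvar : ∀ x y z : g, B ⁅x, y⁆ z = B x ⁅y, z⁆) (a : g) :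
    B.orthogonal (ker (LieAlgebra.ad K g a)) = range (LieAlgebra.ad K g a) := by
  refine B.orthogonal_ker_eq_range hB ?_
  rintro _ ⟨u, rfl⟩ x (hx : ⁅a, x⁆ = 0)
  rw [LieAlgebra.ad_apply, ← hinvar, ← lie_skew, hx, neg_zero, map_zero, LinearMap.zero_apply]

lemma flip_orthogonal_ker_ad_eq_range_ad (hB : B.Nondegenerate)
    (hinvar : ∀ x y z : g, B ⁅x, y⁆ z = B x ⁅y, z⁆) (a : g) :
    B.flip.orthogonal (ker (LieAlgebra.ad K g a)) = range (LieAlgebra.ad K g a) := by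
  refine B.flip.orthogonal_ker_eq_range hB.flip ?_
  rintro _ ⟨u, rfl⟩ x (hx : ⁅a, x⁆ = 0)
  rw [LinearMap.BilinForm.flip_apply, LieAlgebra.ad_apply, ← lie_skew, map_neg,
    LinearMap.neg_apply, hinvar, hx, map_zero, neg_zero]

end InvariantForm

theorem stmt13_general {g : Type*} [LieRing g] [LieAlgebra ℂ g] [FiniteDimensional ℂ g]
    (B : g →ₗ[ℂ] g →ₗ[ℂ] ℂ)
    (hinvar : ∀ x y z : g, B ⁅x, y⁆ z = B x ⁅y, z⁆)
    (hnd : ∀ x : g, (∀ y : g, B x y = 0) → x = 0)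
    (e h f : g)
    (hhe : ⁅h, e⁆ = e) (hhf : ⁅h, f⁆ = -f) (hef : ⁅e, f⁆ = (2 : ℂ) • h) :
    (∀ x : g, ⁅f, x⁆ = 0 → (∀ y : g, ⁅e, y⁆ = 0 → B x y = 0) → x = 0)
    ∧ (∀ y : g, ⁅e, y⁆ = 0 → (∀ x : g, ⁅f, x⁆ = 0 → B x y = 0) → y = 0) := by
  have hB : LinearMap.BilinForm.Nondegenerate B := .ofSeparatingLeft hnd
  refine ⟨fun x hxf hxe ↦ ?_, fun y hye hyf ↦ ?_⟩
  · have hx : x ∈ range (LieAlgebra.ad ℂ g e) := by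
      rw [← flip_orthogonal_ker_ad_eq_range_ad hB hinvar]
      exact hxe
    exact Submodule.disjoint_def.mp (disjoint_ker_ad_range_ad hhe hhf hef) x hxf hx
  · have hy : y ∈ range (LieAlgebra.ad ℂ g f) := by
      rw [← orthogonal_ker_ad_eq_range_ad hB hinvar]
      exact hyf
    have hhf' : ⁅-h, f⁆ = f := by rw [neg_lie, hhf, neg_neg]
    have hhe' : ⁅-h, e⁆ = -e := by rw [neg_lie, hhe]
    have hfe : ⁅f, e⁆ = (2 : ℂ) • -h := by rw [← lie_skew, hef, smul_neg]
    exact Submodule.disjoint_def.mp (disjoint_ker_ad_range_ad hhf' hhe' hfe) y hye hy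

/-- For an `sl₂`-triple `{e,h,f}` (with `[h,e]=e`, `[h,f]=-f`, `[e,f]=2h`) in a
finite-dimensional complex Lie algebra with invariant nondegenerate symmetric
bilinear form, the pairing between the centralizers `𝔤^f = ker(ad f)` and
`𝔤^e = ker(ad e)` is nondegenerate on both sides. -/
theorem stmt13 {g : Type*} [LieRing g] [LieAlgebra ℂ g] [FiniteDimensional ℂ g]
    (B : g →ₗ[ℂ] g →ₗ[ℂ] ℂ)
    (hsymm : ∀ x y : g, B x y = B y x)
    (hinvar : ∀ x y z : g, B ⁅x, y⁆ z = B x ⁅y, z⁆)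
    (hnd : ∀ x : g, (∀ y : g, B x y = 0) → x = 0)
    (e h f : g)
    (hhe : ⁅h, e⁆ = e) (hhf : ⁅h, f⁆ = -f) (hef : ⁅e, f⁆ = (2 : ℂ) • h) :
    (∀ x : g, ⁅f, x⁆ = 0 → (∀ y : g, ⁅e, y⁆ = 0 → B x y = 0) → x = 0)
    ∧ (∀ y : g, ⁅e, y⁆ = 0 → (∀ x : g, ⁅f, x⁆ = 0 → B x y = 0) → y = 0) :=
  stmt13_general B hinvar hnd e h f hhe hhf hef
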